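/- Let p be a prime, a an integer with gcd(a, p) = 1, and S(p, a) = ∑_{r₁,r₂,r₃=1}^{p} e_p(a(r₁³+r₂³+r₃³)²) where e_p(x) = exp(2πi x/p). Then S(p, a) = p²·S₂(p, a) + O(p²), where S₂(p, a) = ∑_{r=1}^{p} e_p(a r²) and the implied constant is absolute. -/

import Mathlib

/-- The additive character `e_q(x) = exp(2πi x / q)`. -/
noncomputable def eq' (q : ℕ) (x : ℤ) : ℂ :=
  Complex.exp (2 * (Real.pi : ℂ) * Complex.I * (x : ℂ) / (q : ℂ))

namespace CSA

open Finset Complex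

lemma eq'_add (q : ℕ) (x y : ℤ) : eq' q (x + y) = eq' q x * eq' q y := by
  rw [eq', eq', eq', ← Complex.exp_add]
  congr 1
  push_cast
  ring

lemma eq'_int_mul (q : ℕ) (k : ℤ) : eq' q ((q : ℤ) * k) = 1 := by
  rcases eq_or_ne q 0 with h | h
  · simp [eq', h]
  · rw [eq']
    have hq : (q : ℂ) ≠ 0 := by exact_mod_cast h
    have : 2 * (Real.pi : ℂ) * Complex.I * ((q : ℤ) * k : ℤ) / (q : ℂ)
        = (k : ℂ) * (2 * Real.pi * Complex.I) := by
      push_cast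
      field_simp
    rw [this, Complex.exp_int_mul_two_pi_mul_I]

lemma eq'_congr (q : ℕ) {x y : ℤ} (h : x % (q : ℤ) = y % (q : ℤ)) : eq' q x = eq' q y := by
  have hd : ((q:ℤ)) ∣ (y - x) := Int.ModEq.dvd h
  obtain ⟨k, hk⟩ := hd
  have : y = x + (q : ℤ) * k := by linarith
  rw [this, eq'_add, eq'_int_mul, mul_one]

lemma eq'_abs (q : ℕ) (x : ℤ) : ‖eq' q x‖ = 1 := by
  rw [eq', Complex.norm_exp]
  have : (2 * (Real.pi : ℂ) * Complex.I * (x : ℂ) / (q : ℂ)).re = 0 := by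
    have : (2 * (Real.pi : ℂ) * Complex.I * (x : ℂ) / (q : ℂ))
        = ((2 * Real.pi * x / q : ℝ) : ℂ) * Complex.I := by
      push_cast; ring
    rw [this]
    simp
  rw [this, Real.exp_zero]

/-- The standard additive character on `ZMod p`. -/
noncomputable def e (p : ℕ) (x : ZMod p) : ℂ := eq' p (x.val : ℤ)

variable {p : ℕ} [NeZero p]

lemma e_intCast (m : ℤ) : e p ((m : ZMod p)) = eq' p m := by
  refine eq'_congr p ?_
  rw [ZMod.val_intCast, Int.emod_emod_of_dvd _ dvd_rfl]

lemma e_add (x y : ZMod p) : e p (x + y) = e p x * e p y := by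
  have h1 : x + y = ((((x.val : ℤ) + (y.val : ℤ)) : ℤ) : ZMod p) := by
    push_cast
    simp [ZMod.natCast_val, ZMod.intCast_zmod_cast]
  calc e p (x + y) = e p ((((x.val : ℤ) + (y.val : ℤ) : ℤ)) : ZMod p) := by rw [← h1]
    _ = eq' p ((x.val : ℤ) + (y.val : ℤ)) := e_intCast _
    _ = e p x * e p y := eq'_add p _ _

lemma e_zero : e p (0 : ZMod p) = 1 := by
  simp [e, eq', ZMod.val_zero]

lemma e_abs (x : ZMod p) : ‖e p x‖ = 1 := eq'_abs p _

lemma e_neg (x : ZMod p) : e p (-x) = (e p x)⁻¹ := by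
  have h := e_add x (-x)
  rw [add_neg_cancel, e_zero] at h
  exact eq_inv_of_mul_eq_one_left (by rw [mul_comm] at h; exact h.symm) |>.symm ▸ rfl

lemma eq'_conj (q : ℕ) (m : ℤ) : (starRingEnd ℂ) (eq' q m) = eq' q (-m) := by
  rw [eq', eq', ← Complex.exp_conj]
  congr 1
  simp only [map_div₀, map_mul, Complex.conj_I, Complex.conj_ofReal, map_ofNat, map_intCast,
    map_natCast]
  push_cast
  ring

lemma e_neg_intCast (x : ZMod p) : e p (-x) = eq' p (-(x.val : ℤ)) := by
  have : -x = (((-(x.val : ℤ)) : ℤ) : ZMod p) := by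
    push_cast
    simp [ZMod.natCast_val, ZMod.intCast_zmod_cast]
  rw [this, e_intCast]

lemma e_conj (x : ZMod p) : (starRingEnd ℂ) (e p x) = e p (-x) := by
  rw [e_neg_intCast]
  exact eq'_conj p _

lemma e_ne_one {x : ZMod p} (hx : x ≠ 0) : e p x ≠ 1 := by
  intro h
  have hv : 0 < x.val := Nat.pos_of_ne_zero (fun h0 => hx ((ZMod.val_eq_zero x).mp h0))
  have hvp : x.val < p := ZMod.val_lt x
  obtain ⟨n, hn⟩ := Complex.exp_eq_one_iff.mp h
  have hp : (p : ℂ) ≠ 0 := by exact_mod_cast (NeZero.ne p)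
  have hπ : (Real.pi : ℂ) ≠ 0 := by exact_mod_cast Real.pi_ne_zero
  have hI := Complex.I_ne_zero
  rw [div_eq_iff hp] at hn
  have hc : (2 * (Real.pi : ℂ) * Complex.I) ≠ 0 := by
    simp [hπ, hI]
  have h2 : (2 * (Real.pi:ℂ) * Complex.I) * (((x.val : ℤ) : ℂ))
      = (2 * (Real.pi:ℂ) * Complex.I) * ((n : ℂ) * (p : ℂ)) := by
    linear_combination hn
  have h2' : ((x.val : ℤ) : ℂ) = ((n * p : ℤ) : ℂ) := by
    have := mul_left_cancel₀ hc h2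
    push_cast
    exact this
  have h3 : (x.val : ℤ) = n * p := by exact_mod_cast h2'
  have h4 : (0 : ℤ) < x.val := by exact_mod_cast hv
  have h5 : ((x.val : ℤ)) < p := by exact_mod_cast hvp
  have hp1 : (0:ℤ) < p := by exact_mod_cast Nat.pos_of_ne_zero (NeZero.ne p)
  rcases lt_trichotomy n 0 with h6 | h6 | h6
  · nlinarith
  · exfalso; rw [h6, zero_mul] at h3; omega
  · nlinarith

lemma sum_e_mul (u : ZMod p) :
    ∑ t : ZMod p, e p (t * u) = if u = 0 then (p : ℂ) else 0 := by
  rcases eq_or_ne u 0 with h | h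
  · simp [h, e_zero, Finset.card_univ, ZMod.card]
  · rw [if_neg h]
    set S := ∑ t : ZMod p, e p (t * u) with hS
    have key : e p u * S = S := by
      rw [hS, Finset.mul_sum]
      have : ∀ t : ZMod p, e p u * e p (t * u) = e p ((t + 1) * u) := by
        intro t
        rw [← e_add]
        ring_nf
      rw [Finset.sum_congr rfl (fun t _ => this t)]
      exact Fintype.sum_equiv (Equiv.addRight 1) _ _ (fun t => rfl)
    have h2 : (e p u - 1) * S = 0 := by linear_combination key
    rcases mul_eq_zero.mp h2 with h3 | h3
    · exact absurd (sub_eq_zero.mp h3) (e_ne_one h)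
    · exact h3

section PrimeP

variable [hp : Fact p.Prime]

lemma two_ne_zero' (hp2 : p ≠ 2) : (2 : ZMod p) ≠ 0 := by
  intro h
  have : ((2 : ℕ) : ZMod p) = 0 := by exact_mod_cast h
  rw [ZMod.natCast_eq_zero_iff] at this
  have h1 := Nat.le_of_dvd (by norm_num) this
  have h2 := hp.out.two_le
  omega

lemma quad_sum_abs (hp2 : p ≠ 2) (α β : ZMod p) (hα : α ≠ 0) :
    ‖∑ m : ZMod p, e p (α * m ^ 2 + β * m)‖ = Real.sqrt p := by
  set G := ∑ m : ZMod p, e p (α * m ^ 2 + β * m) with hG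
  have hGconj : (starRingEnd ℂ) G = ∑ m : ZMod p, e p (-(α * m ^ 2 + β * m)) := by
    rw [hG, map_sum]
    exact Finset.sum_congr rfl fun m _ => e_conj _
  have expand : ∀ m' h : ZMod p,
      e p (α * (m' + h) ^ 2 + β * (m' + h)) * e p (-(α * m' ^ 2 + β * m'))
      = e p (α * h ^ 2 + β * h) * e p (m' * (2 * α * h)) := by
    intro m' h
    rw [← e_add, ← e_add]
    congr 1
    ring
  have key : G * (starRingEnd ℂ) G = (p : ℂ) := by
    calc G * (starRingEnd ℂ) G
        = ∑ m' : ZMod p, (∑ m : ZMod p, e p (α * m ^ 2 + β * m)) *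
            e p (-(α * m' ^ 2 + β * m')) := by
          rw [hGconj, Finset.mul_sum]
      _ = ∑ m' : ZMod p, ∑ h : ZMod p,
            e p (α * (m' + h) ^ 2 + β * (m' + h)) * e p (-(α * m' ^ 2 + β * m')) := by
          refine Finset.sum_congr rfl fun m' _ => ?_
          rw [Finset.sum_mul]
          exact (Fintype.sum_equiv (Equiv.addLeft m') _ _ fun h => rfl).symm
      _ = ∑ m' : ZMod p, ∑ h : ZMod p,
            e p (α * h ^ 2 + β * h) * e p (m' * (2 * α * h)) :=
          Finset.sum_congr rfl fun m' _ => Finset.sum_congr rfl fun h _ => expand m' h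
      _ = ∑ h : ZMod p, ∑ m' : ZMod p,
            e p (α * h ^ 2 + β * h) * e p (m' * (2 * α * h)) := Finset.sum_comm
      _ = ∑ h : ZMod p, e p (α * h ^ 2 + β * h) * ∑ m' : ZMod p, e p (m' * (2 * α * h)) := by
          simp [Finset.mul_sum]
      _ = ∑ h : ZMod p, e p (α * h ^ 2 + β * h) * (if 2 * α * h = 0 then (p : ℂ) else 0) := by
          exact Finset.sum_congr rfl fun h _ => by rw [sum_e_mul]
      _ = (p : ℂ) := by
          rw [Finset.sum_eq_single 0]
          · simp [e_zero]
          · intro h _ hh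
            have : 2 * α * h ≠ 0 := mul_ne_zero (mul_ne_zero (two_ne_zero' hp2) hα) hh
            rw [if_neg this, mul_zero]
          · intro habs
            exact absurd (Finset.mem_univ 0) habs
  have hn : Complex.normSq G = p := by
    have : (Complex.normSq G : ℂ) = (p : ℂ) := by rw [← Complex.mul_conj]; exact key
    exact_mod_cast this
  rw [Complex.norm_def, hn]

/-- Existence of a cubic multiplicative character when `3 ∣ p - 1`. -/
lemma exists_cubic_char (h3 : 3 ∣ p - 1) :
    ∃ χ : ZMod p → ℂ,
      χ 0 = 0 ∧
      (∀ x y, χ (x * y) = χ x * χ y) ∧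
      χ 1 = 1 ∧
      (∀ x : ZMod p, (starRingEnd ℂ) (χ x) = χ x⁻¹) ∧
      (∃ b : ZMod p, b ≠ 0 ∧ χ b ≠ 1 ∧ χ b ^ 2 ≠ 1) ∧
      (∀ u : ZMod p,
        ((Finset.univ.filter fun x : ZMod p => x ^ 3 = u).card : ℂ) = 1 + χ u + χ u ^ 2) := by
  classical
  obtain ⟨g, hg⟩ := IsCyclic.exists_generator (α := (ZMod p)ˣ)
  set n := Fintype.card (ZMod p)ˣ with hncard
  have hn : n = p - 1 := by
    rw [hncard, ZMod.card_units_eq_totient, Nat.totient_prime hp.out]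
  have h3n : 3 ∣ n := hn ▸ h3
  have hnpos : 0 < n := Fintype.card_pos
  have hn3 : 3 ≤ n := Nat.le_of_dvd hnpos h3n
  have horder : orderOf g = n := by
    rw [orderOf_eq_card_of_forall_mem_zpowers hg, Nat.card_eq_fintype_card]
  -- the primitive cube root of unity in ℂ
  set ζ : ℂ := Complex.exp (2 * Real.pi * Complex.I / ((3 : ℕ) : ℂ)) with hζdef
  have hζ : IsPrimitiveRoot ζ 3 := Complex.isPrimitiveRoot_exp 3 (by norm_num)
  have hζ3 : ζ ^ (3 : ℕ) = 1 := hζ.pow_eq_one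
  have hζne1 : ζ ≠ 1 := hζ.ne_one (by norm_num)
  have hζ2ne1 : ζ ^ (2 : ℕ) ≠ 1 := by
    intro h
    have := hζ.dvd_of_pow_eq_one 2 h
    omega
  have hζabs : ‖ζ‖ = 1 := by
    rw [hζdef, Complex.norm_exp]
    have : (2 * (Real.pi : ℂ) * Complex.I / ((3:ℕ):ℂ)).re = 0 := by
      have : (2 * (Real.pi : ℂ) * Complex.I / ((3:ℕ):ℂ))
          = ((2 * Real.pi / 3 : ℝ) : ℂ) * Complex.I := by
        push_cast; ring
      rw [this]
      simp
    rw [this, Real.exp_zero]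
  have hζconj : (starRingEnd ℂ) ζ = ζ⁻¹ := (Complex.inv_eq_conj hζabs).symm
  have hζunit : ζ ≠ 0 := by
    intro h
    rw [h] at hζ3
    simp at hζ3
  -- discrete log
  have hk : ∀ u : (ZMod p)ˣ, ∃ j : ℤ, g ^ j = u := fun u => Subgroup.mem_zpowers_iff.mp (hg u)
  set k : (ZMod p)ˣ → ℤ := fun u => (hk u).choose with hkdef
  have hgk : ∀ u : (ZMod p)ˣ, g ^ (k u) = u := fun u => (hk u).choose_spec
  -- well-definedness
  have welldef : ∀ (j : ℤ) (u : (ZMod p)ˣ), g ^ j = u → ζ ^ j = ζ ^ (k u) := by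
    intro j u hj
    have h1 : g ^ (j - k u) = 1 := by
      rw [zpow_sub, hj, hgk u, mul_inv_cancel]
    have h2 : ((orderOf g : ℤ)) ∣ (j - k u) := orderOf_dvd_iff_zpow_eq_one.mpr h1
    have h3' : (3 : ℤ) ∣ (j - k u) := by
      refine dvd_trans ?_ h2
      exact_mod_cast Int.natCast_dvd_natCast.mpr (horder ▸ h3n)
    obtain ⟨c, hc⟩ := h3'
    have : ζ ^ (j - k u) = 1 := by
      rw [hc, zpow_mul]
      norm_cast
      rw [hζ3, one_zpow]
    calc ζ ^ j = ζ ^ (k u + (j - k u)) := by ring_nf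
      _ = ζ ^ (k u) * ζ ^ (j - k u) := zpow_add₀ hζunit _ _
      _ = ζ ^ (k u) := by rw [this, mul_one]
  -- the character
  set χ : ZMod p → ℂ := fun x => if hx : x = 0 then 0 else ζ ^ (k (Units.mk0 x hx)) with hχdef
  have hχ0 : χ 0 = 0 := by simp [hχdef]
  have hχunit : ∀ (u : (ZMod p)ˣ), χ (u : ZMod p) = ζ ^ (k u) := by
    intro u
    have hne : (u : ZMod p) ≠ 0 := u.ne_zero
    simp only [hχdef, dif_neg hne]
    congr 1
    congr 1
    exact Units.ext rfl
  have hχmul : ∀ x y : ZMod p, χ (x * y) = χ x * χ y := by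
    intro x y
    rcases eq_or_ne x 0 with hx | hx
    · simp [hx, hχ0]
    rcases eq_or_ne y 0 with hy | hy
    · simp [hy, hχ0]
    have hxy : x * y ≠ 0 := mul_ne_zero hx hy
    have e1 : χ (x * y) = ζ ^ (k (Units.mk0 x hx * Units.mk0 y hy)) := by
      rw [show x * y = ((Units.mk0 x hx * Units.mk0 y hy : (ZMod p)ˣ) : ZMod p) from rfl]
      exact hχunit _
    have e2 : ζ ^ (k (Units.mk0 x hx) + k (Units.mk0 y hy))
        = ζ ^ (k (Units.mk0 x hx * Units.mk0 y hy)) := by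
      refine welldef _ _ ?_
      rw [zpow_add, hgk, hgk]
    have e3 : χ x = ζ ^ (k (Units.mk0 x hx)) := by simp only [hχdef, dif_neg hx]
    have e4 : χ y = ζ ^ (k (Units.mk0 y hy)) := by simp only [hχdef, dif_neg hy]
    rw [e1, ← e2, e3, e4, zpow_add₀ hζunit]
  have hχ1 : χ 1 = 1 := by
    have : χ ((1 : (ZMod p)ˣ) : ZMod p) = ζ ^ (k 1) := hχunit 1
    rw [Units.val_one] at this
    rw [this, ← welldef 0 1 (by rw [zpow_zero]), zpow_zero]
  have hχconj : ∀ x : ZMod p, (starRingEnd ℂ) (χ x) = χ x⁻¹ := by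
    intro x
    rcases eq_or_ne x 0 with hx | hx
    · simp [hx, hχ0]
    have hxi : x⁻¹ ≠ 0 := inv_ne_zero hx
    have e3 : χ x = ζ ^ (k (Units.mk0 x hx)) := by simp only [hχdef, dif_neg hx]
    have e4 : χ x⁻¹ = ζ ^ (k (Units.mk0 x⁻¹ hxi)) := by simp only [hχdef, dif_neg hxi]
    have huinv : (Units.mk0 x⁻¹ hxi) = (Units.mk0 x hx)⁻¹ := by
      ext
      simp
    have e5 : ζ ^ (-(k (Units.mk0 x hx))) = ζ ^ (k (Units.mk0 x⁻¹ hxi)) := by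
      refine welldef _ _ ?_
      rw [zpow_neg, hgk, huinv]
    rw [e3, e4, ← e5, map_zpow₀, hζconj, ← zpow_neg_one, ← zpow_mul]
    congr 1
    ring
  have hχb : ∃ b : ZMod p, b ≠ 0 ∧ χ b ≠ 1 ∧ χ b ^ 2 ≠ 1 := by
    refine ⟨(g : ZMod p), Units.ne_zero g, ?_, ?_⟩
    · rw [hχunit g, ← welldef 1 g (zpow_one g), zpow_one]
      exact hζne1
    · rw [hχunit g, ← welldef 1 g (zpow_one g), zpow_one]
      exact_mod_cast hζ2ne1
  -- the counting identity
  have hcount : ∀ u : ZMod p,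
      ((Finset.univ.filter fun x : ZMod p => x ^ 3 = u).card : ℂ) = 1 + χ u + χ u ^ 2 := by
    intro u
    rcases eq_or_ne u 0 with hu | hu
    · have : (Finset.univ.filter fun x : ZMod p => x ^ 3 = u) = {0} := by
        ext x
        simp [hu, pow_eq_zero_iff (three_ne_zero)]
      rw [this, hu]
      simp [hχ0]
    · set U : (ZMod p)ˣ := Units.mk0 u hu with hU
      set m : ℤ := k U with hm
      have hgm : g ^ m = U := hgk U
      have hχu : χ u = ζ ^ m := by simp only [hχdef, dif_neg hu]; rfl
      by_cases h3m : (3 : ℤ) ∣ m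
      · -- u is a cube; count is 3
        obtain ⟨c, hc⟩ := h3m
        have hχu1 : χ u = 1 := by
          rw [hχu, hc, zpow_mul]
          norm_cast
          rw [hζ3, one_zpow]
        -- the cube root of unity in ZMod p
        set η : ZMod p := ((g ^ (n / 3) : (ZMod p)ˣ) : ZMod p) with hη
        have hgn : g ^ n = 1 := by
          rw [← horder]; exact pow_orderOf_eq_one g
        have hη3 : η ^ 3 = 1 := by
          rw [hη, ← Units.val_pow_eq_pow_val, ← pow_mul, Nat.div_mul_cancel h3n, hgn,
            Units.val_one]
        have hηne0 : η ≠ 0 := Units.ne_zero _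
        have hηne1 : η ≠ 1 := by
          intro h
          have hu1 : (g ^ (n / 3) : (ZMod p)ˣ) = 1 := Units.ext (by simpa [hη] using h)
          have hdvd : orderOf g ∣ n / 3 := orderOf_dvd_of_pow_eq_one hu1
          rw [horder] at hdvd
          have h1 : n / 3 < n := Nat.div_lt_self hnpos (by norm_num)
          have h2 : 0 < n / 3 := Nat.div_pos hn3 (by norm_num)
          exact absurd (Nat.le_of_dvd h2 hdvd) (not_le.mpr h1)
        have hη2ne1 : η ^ 2 ≠ 1 := by
          intro h
          have hu1 : (g ^ (n / 3) : (ZMod p)ˣ) ^ 2 = 1 := Units.ext (by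
            rw [Units.val_pow_eq_pow_val, Units.val_one]
            simpa [hη] using h)
          rw [← pow_mul] at hu1
          have hdvd : orderOf g ∣ n / 3 * 2 := orderOf_dvd_of_pow_eq_one hu1
          rw [horder] at hdvd
          obtain ⟨t, ht⟩ := h3n
          have h1 : n / 3 * 2 = 2 * t := by omega
          have h2 : 0 < t := by omega
          rw [h1] at hdvd
          have := Nat.le_of_dvd (by omega) hdvd
          omega
        have hsum : η ^ 2 + η + 1 = 0 := by
          have hfac : (η - 1) * (η ^ 2 + η + 1) = 0 := by linear_combination hη3
          rcases mul_eq_zero.mp hfac with h | h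
          · exact absurd (by linear_combination h) hηne1
          · exact h
        -- the cube root of u
        set W : (ZMod p)ˣ := g ^ c with hW
        set w : ZMod p := (W : ZMod p) with hw
        have hWU : W ^ (3 : ℕ) = U := by
          rw [hW, ← zpow_natCast (g ^ c) 3, ← zpow_mul]
          rw [show c * ((3 : ℕ) : ℤ) = m by omega]
          exact hgm
        have hw3 : w ^ 3 = u := by
          rw [hw, ← Units.val_pow_eq_pow_val, hWU, hU, Units.val_mk0]
        have hwne : w ≠ 0 := Units.ne_zero _
        have hset : (Finset.univ.filter fun x : ZMod p => x ^ 3 = u)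
            = {w, w * η, w * η ^ 2} := by
          ext x
          simp only [Finset.mem_filter, Finset.mem_univ, true_and, Finset.mem_insert,
            Finset.mem_singleton]
          constructor
          · intro hx3
            have hx0 : x ≠ 0 := by
              intro h
              rw [h] at hx3
              simp at hx3
              exact hu hx3.symm
            set z : ZMod p := x * w⁻¹ with hz
            have hz3 : z ^ 3 = 1 := by
              rw [hz, mul_pow, inv_pow, hx3, hw3, mul_inv_cancel₀ hu]
            have hfac : (z - 1) * (z - η) * (z - η ^ 2) = 0 := by
              linear_combination hz3 + (z - z ^ 2) * hsum + (z - 1) * hη3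
            have hxz : x = w * z := by
              rw [hz]
              field_simp
            rcases mul_eq_zero.mp hfac with h | h
            · rcases mul_eq_zero.mp h with h' | h'
              · left; rw [hxz, sub_eq_zero.mp h', mul_one]
              · right; left; rw [hxz, sub_eq_zero.mp h']
            · right; right; rw [hxz, sub_eq_zero.mp h]
          · intro hx
            rcases hx with h | h | h
            · rw [h]; exact hw3
            · rw [h, mul_pow, hw3, hη3, mul_one]
            · rw [h, mul_pow, hw3, show (η ^ 2) ^ 3 = (η ^ 3) ^ 2 by ring, hη3, one_pow,
                mul_one]
        have hcard : ({w, w * η, w * η ^ 2} : Finset (ZMod p)).card = 3 := by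
          have h1 : w ≠ w * η := by
            intro h
            have h' : w * 1 = w * η := by rw [mul_one]; exact h
            exact hηne1 (mul_left_cancel₀ hwne h').symm
          have h2 : w ≠ w * η ^ 2 := by
            intro h
            have h' : w * 1 = w * η ^ 2 := by rw [mul_one]; exact h
            exact hη2ne1 (mul_left_cancel₀ hwne h').symm
          have h3' : w * η ≠ w * η ^ 2 := by
            intro h
            have := mul_left_cancel₀ hwne h
            have hη2 : η * 1 = η * η := by rw [mul_one]; linear_combination this
            exact hηne1 (mul_left_cancel₀ hηne0 hη2).symm
          rw [Finset.card_insert_of_notMem (by simp [h1, h2]),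
            Finset.card_insert_of_notMem (by simp [h3']), Finset.card_singleton]
        rw [hset, hcard, hχu1]
        norm_num
      · -- u is not a cube; count is 0
        have hcne1 : χ u ≠ 1 := by
          rw [hχu]
          intro h
          exact h3m ((hζ.zpow_eq_one_iff_dvd m).mp h)
        have hc3 : χ u ^ 3 = 1 := by
          rw [hχu, ← zpow_natCast (ζ ^ m) 3, ← zpow_mul, mul_comm, zpow_mul]
          norm_cast
          rw [hζ3, one_zpow]
        have hsum0 : 1 + χ u + χ u ^ 2 = 0 := by
          have hfac : (χ u - 1) * (χ u ^ 2 + χ u + 1) = 0 := by linear_combination hc3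
          rcases mul_eq_zero.mp hfac with h | h
          · exact absurd (by linear_combination h) hcne1
          · linear_combination h
        have hempty : (Finset.univ.filter fun x : ZMod p => x ^ 3 = u) = ∅ := by
          rw [Finset.filter_eq_empty_iff]
          intro x _
          intro hx3
          have hx0 : x ≠ 0 := by
            intro h
            rw [h] at hx3
            simp at hx3
            exact hu hx3.symm
          set X : (ZMod p)ˣ := Units.mk0 x hx0 with hX
          have hXU : X ^ (3 : ℕ) = U := by
            ext
            rw [Units.val_pow_eq_pow_val, hX, Units.val_mk0, hU, Units.val_mk0]
            exact hx3
          have hgj : g ^ (k X * (3 : ℕ) : ℤ) = U := by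
            rw [zpow_mul, hgk X, zpow_natCast]
            exact hXU
          have h1 : g ^ (k X * (3 : ℕ) - m) = 1 := by
            rw [zpow_sub, hgj, hgm, mul_inv_cancel]
          have h2 : ((orderOf g : ℤ)) ∣ (k X * (3 : ℕ) - m) :=
            orderOf_dvd_iff_zpow_eq_one.mpr h1
          have h3' : (3 : ℤ) ∣ (k X * (3 : ℕ) - m) := by
            refine dvd_trans ?_ h2
            exact_mod_cast Int.natCast_dvd_natCast.mpr (horder ▸ h3n)
          have : (3 : ℤ) ∣ m := by
            have hd : (3 : ℤ) ∣ k X * (3 : ℕ) := ⟨k X, by push_cast; ring⟩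
            omega
          exact h3m this
        rw [hempty]
        simp only [Finset.card_empty, Nat.cast_zero]
        linear_combination -hsum0
  exact ⟨χ, hχ0, hχmul, hχ1, hχconj, hχb, hcount⟩

lemma sum_char_eq_zero (χ : ZMod p → ℂ)
    (hmul : ∀ x y, χ (x * y) = χ x * χ y)
    (b : ZMod p) (hb : b ≠ 0) (hbne : χ b ≠ 1) :
    ∑ u : ZMod p, χ u = 0 := by
  have key : χ b * ∑ u : ZMod p, χ u = ∑ u : ZMod p, χ u := by
    rw [Finset.mul_sum]
    have : ∀ u : ZMod p, χ b * χ u = χ (b * u) := fun u => (hmul b u).symm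
    rw [Finset.sum_congr rfl fun u _ => this u]
    exact Fintype.sum_equiv (Equiv.mulLeft₀ b hb) _ _ (fun u => rfl)
  have h2 : (χ b - 1) * ∑ u : ZMod p, χ u = 0 := by linear_combination key
  rcases mul_eq_zero.mp h2 with h3 | h3
  · exact absurd (by linear_combination h3) hbne
  · exact h3

lemma char_sum_abs (χ : ZMod p → ℂ) (hχ0 : χ 0 = 0)
    (hmul : ∀ x y, χ (x * y) = χ x * χ y) (hχ1 : χ 1 = 1)
    (hconj : ∀ x, (starRingEnd ℂ) (χ x) = χ x⁻¹)
    (b : ZMod p) (hb : b ≠ 0) (hbne : χ b ≠ 1)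
    (t : ZMod p) (ht : t ≠ 0) :
    ‖∑ u : ZMod p, χ u * e p (t * u)‖ = Real.sqrt p := by
  set T := ∑ u : ZMod p, χ u * e p (t * u) with hT
  have hTc : (starRingEnd ℂ) T = ∑ v : ZMod p, χ v⁻¹ * e p (-(t * v)) := by
    rw [hT, map_sum]
    exact Finset.sum_congr rfl fun v _ => by rw [map_mul, e_conj, hconj]
  have hsplit : ∀ c : ZMod p,
      ∑ v ∈ Finset.univ.erase (0 : ZMod p), e p (v * c)
        = (if c = 0 then (p : ℂ) else 0) - 1 := by
    intro c
    have h := sum_e_mul (p := p) c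
    rw [← Finset.add_sum_erase _ _ (Finset.mem_univ (0 : ZMod p)), zero_mul, e_zero] at h
    linear_combination h
  have key : T * (starRingEnd ℂ) T = (p : ℂ) := by
    calc T * (starRingEnd ℂ) T
        = ∑ v : ZMod p, χ v⁻¹ * e p (-(t * v)) * T := by
          rw [hTc, mul_comm, Finset.sum_mul]
      _ = ∑ v ∈ Finset.univ.erase (0 : ZMod p), χ v⁻¹ * e p (-(t * v)) * T := by
          rw [← Finset.add_sum_erase _ _ (Finset.mem_univ (0 : ZMod p))]
          rw [inv_zero, hχ0, zero_mul, zero_mul, zero_add]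
      _ = ∑ v ∈ Finset.univ.erase (0 : ZMod p), ∑ w : ZMod p,
            χ w * e p (v * (t * (w - 1))) := by
          refine Finset.sum_congr rfl fun v hv => ?_
          have hv0 : v ≠ 0 := (Finset.mem_erase.mp hv).1
          have hTv : T = ∑ w : ZMod p, χ (v * w) * e p (t * (v * w)) :=
            (Fintype.sum_equiv (Equiv.mulLeft₀ v hv0) _ _ (fun w => rfl)).symm
          rw [hTv, Finset.mul_sum]
          refine Finset.sum_congr rfl fun w _ => ?_
          have h1 : χ v⁻¹ * (χ (v * w)) = χ w := by
            rw [← hmul, inv_mul_cancel_left₀ hv0]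
          have h2 : e p (-(t * v)) * e p (t * (v * w)) = e p (v * (t * (w - 1))) := by
            rw [← e_add]
            congr 1
            ring
          calc χ v⁻¹ * e p (-(t * v)) * (χ (v * w) * e p (t * (v * w)))
              = (χ v⁻¹ * χ (v * w)) * (e p (-(t * v)) * e p (t * (v * w))) := by ring
            _ = χ w * e p (v * (t * (w - 1))) := by rw [h1, h2]
      _ = ∑ w : ZMod p, ∑ v ∈ Finset.univ.erase (0 : ZMod p),
            χ w * e p (v * (t * (w - 1))) := Finset.sum_comm
      _ = ∑ w : ZMod p, χ w * ((if t * (w - 1) = 0 then (p : ℂ) else 0) - 1) := by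
          refine Finset.sum_congr rfl fun w _ => ?_
          rw [← Finset.mul_sum, hsplit]
      _ = (p : ℂ) := by
          have hdistrib : ∀ w : ZMod p,
              χ w * ((if t * (w - 1) = 0 then (p : ℂ) else 0) - 1)
              = χ w * (if t * (w - 1) = 0 then (p : ℂ) else 0) - χ w := by
            intro w; ring
          rw [Finset.sum_congr rfl fun w _ => hdistrib w, Finset.sum_sub_distrib,
            sum_char_eq_zero χ hmul b hb hbne, sub_zero]
          rw [Finset.sum_eq_single (1 : ZMod p)]
          · simp [hχ1]
          · intro w _ hw
            have : t * (w - 1) ≠ 0 := mul_ne_zero ht (sub_ne_zero.mpr hw)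
            rw [if_neg this, mul_zero]
          · intro habs
            exact absurd (Finset.mem_univ 1) habs
  have hn : Complex.normSq T = p := by
    have : (Complex.normSq T : ℂ) = (p : ℂ) := by rw [← Complex.mul_conj]; exact key
    exact_mod_cast this
  rw [Complex.norm_def, hn]

lemma cubic_sum_bound (h3 : 3 ∣ p - 1) (t : ZMod p) (ht : t ≠ 0) :
    ‖∑ x : ZMod p, e p (t * x ^ 3)‖ ≤ 2 * Real.sqrt p := by
  classical
  obtain ⟨χ, hχ0, hmul, hχ1, hconj, ⟨b, hb, hbne, hb2ne⟩, hcount⟩ := exists_cubic_char h3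
  have hfiber : ∑ x : ZMod p, e p (t * x ^ 3)
      = ∑ u : ZMod p, ((Finset.univ.filter fun x : ZMod p => x ^ 3 = u).card : ℂ)
          * e p (t * u) := by
    calc ∑ x : ZMod p, e p (t * x ^ 3)
        = ∑ u : ZMod p, ∑ x ∈ Finset.univ.filter fun x : ZMod p => x ^ 3 = u,
            e p (t * x ^ 3) := (Finset.sum_fiberwise _ _ _).symm
      _ = ∑ u : ZMod p, ((Finset.univ.filter fun x : ZMod p => x ^ 3 = u).card : ℂ)
            * e p (t * u) := by
          refine Finset.sum_congr rfl fun u _ => ?_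
          rw [Finset.sum_congr rfl (fun x hx => by rw [(Finset.mem_filter.mp hx).2]),
            Finset.sum_const, nsmul_eq_mul]
  have hsplit : ∑ x : ZMod p, e p (t * x ^ 3)
      = (∑ u : ZMod p, e p (u * t)) + (∑ u : ZMod p, χ u * e p (t * u))
        + (∑ u : ZMod p, (fun v => χ v ^ 2) u * e p (t * u)) := by
    rw [hfiber]
    rw [Finset.sum_congr rfl fun u _ => by
      rw [hcount u, show (1 + χ u + χ u ^ 2) * e p (t * u)
        = e p (u * t) + χ u * e p (t * u) + χ u ^ 2 * e p (t * u) by rw [mul_comm t u]; ring]]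
    rw [Finset.sum_add_distrib, Finset.sum_add_distrib]
  have h1 : ∑ u : ZMod p, e p (u * t) = 0 := by
    rw [sum_e_mul, if_neg ht]
  have h2 : ‖∑ u : ZMod p, χ u * e p (t * u)‖ = Real.sqrt p :=
    char_sum_abs χ hχ0 hmul hχ1 hconj b hb hbne t ht
  have h3' : ‖∑ u : ZMod p, (fun v => χ v ^ 2) u * e p (t * u)‖ = Real.sqrt p := by
    refine char_sum_abs (fun v => χ v ^ 2) (by simp [hχ0])
      (fun x y => by show χ (x * y) ^ 2 = χ x ^ 2 * χ y ^ 2; rw [hmul]; ring)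
      (by simp [hχ1]) (fun x => by show _ = χ x⁻¹ ^ 2; rw [map_pow, hconj]) b hb hb2ne t ht
  rw [hsplit, h1, zero_add]
  calc ‖_ + _‖ ≤ ‖_‖ + ‖_‖ := norm_add_le _ _
    _ ≤ 2 * Real.sqrt p := by rw [h2, h3']; ring_nf; rfl

lemma main_est (h3 : 3 ∣ p - 1) (hp2 : p ≠ 2) (α : ZMod p) (hα : α ≠ 0) :
    ‖(∑ x : ZMod p, ∑ y : ZMod p, ∑ z : ZMod p,
        e p (α * (x ^ 3 + y ^ 3 + z ^ 3) ^ 2))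
      - (p : ℂ) ^ 2 * ∑ m : ZMod p, e p (α * m ^ 2)‖ ≤ 8 * (p : ℝ) ^ 2 := by
  classical
  set Cf : ZMod p → ℂ := fun t => ∑ x : ZMod p, e p (t * x ^ 3) with hCf
  set Gf : ZMod p → ℂ := fun t => ∑ m : ZMod p, e p (α * m ^ 2 + (-t) * m) with hGf
  set S : ℂ := ∑ x : ZMod p, ∑ y : ZMod p, ∑ z : ZMod p,
    e p (α * (x ^ 3 + y ^ 3 + z ^ 3) ^ 2) with hS
  set S₂ : ℂ := ∑ m : ZMod p, e p (α * m ^ 2) with hS₂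
  -- expansion of the product
  have hprod : ∀ t : ZMod p, Cf t ^ 3 * Gf t
      = ∑ x : ZMod p, ∑ y : ZMod p, ∑ z : ZMod p, ∑ m : ZMod p,
          e p (α * m ^ 2) * e p (t * ((x ^ 3 + y ^ 3 + z ^ 3) - m)) := by
    intro t
    have e1 : Cf t ^ 3 = ∑ x : ZMod p, ∑ y : ZMod p, ∑ z : ZMod p,
        e p (t * x ^ 3) * e p (t * y ^ 3) * e p (t * z ^ 3) := by
      calc Cf t ^ 3 = Cf t * Cf t * Cf t := by ring
        _ = ∑ x : ZMod p, e p (t * x ^ 3) * Cf t * Cf t := by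
            rw [hCf]; rw [Finset.sum_mul, Finset.sum_mul]
        _ = _ := by
            refine Finset.sum_congr rfl fun x _ => ?_
            rw [hCf, mul_assoc, Finset.sum_mul, Finset.mul_sum]
            refine Finset.sum_congr rfl fun y _ => ?_
            rw [Finset.mul_sum, Finset.mul_sum]
            refine Finset.sum_congr rfl fun z _ => ?_
            ring
    calc Cf t ^ 3 * Gf t
        = ∑ x : ZMod p, ∑ y : ZMod p, ∑ z : ZMod p,
            (e p (t * x ^ 3) * e p (t * y ^ 3) * e p (t * z ^ 3)) * Gf t := by
          rw [e1, Finset.sum_mul]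
          refine Finset.sum_congr rfl fun x _ => ?_
          rw [Finset.sum_mul]
          refine Finset.sum_congr rfl fun y _ => ?_
          rw [Finset.sum_mul]
      _ = ∑ x : ZMod p, ∑ y : ZMod p, ∑ z : ZMod p, ∑ m : ZMod p,
            e p (α * m ^ 2) * e p (t * ((x ^ 3 + y ^ 3 + z ^ 3) - m)) := by
          refine Finset.sum_congr rfl fun x _ => Finset.sum_congr rfl fun y _ =>
            Finset.sum_congr rfl fun z _ => ?_
          rw [hGf, Finset.mul_sum]
          refine Finset.sum_congr rfl fun m _ => ?_
          rw [← e_add, ← e_add, ← e_add, ← e_add]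
          congr 1
          ring
  -- the key identity : ∑ t Cf t ^ 3 * Gf t = p * S
  have key : ∑ t : ZMod p, Cf t ^ 3 * Gf t = (p : ℂ) * S := by
    rw [Finset.sum_congr rfl fun t _ => hprod t]
    rw [Finset.sum_comm]
    have hinner : ∀ x : ZMod p, (∑ t : ZMod p, ∑ y : ZMod p, ∑ z : ZMod p, ∑ m : ZMod p,
        e p (α * m ^ 2) * e p (t * ((x ^ 3 + y ^ 3 + z ^ 3) - m)))
        = ∑ y : ZMod p, ∑ z : ZMod p, (p : ℂ) * e p (α * (x ^ 3 + y ^ 3 + z ^ 3) ^ 2) := by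
      intro x
      rw [Finset.sum_comm]
      refine Finset.sum_congr rfl fun y _ => ?_
      rw [Finset.sum_comm]
      refine Finset.sum_congr rfl fun z _ => ?_
      rw [Finset.sum_comm]
      have : ∀ m : ZMod p, (∑ t : ZMod p,
          e p (α * m ^ 2) * e p (t * ((x ^ 3 + y ^ 3 + z ^ 3) - m)))
          = e p (α * m ^ 2) *
            (if (x ^ 3 + y ^ 3 + z ^ 3) - m = 0 then (p : ℂ) else 0) := by
        intro m
        rw [← Finset.mul_sum, sum_e_mul]
      rw [Finset.sum_congr rfl fun m _ => this m]
      rw [Finset.sum_eq_single (x ^ 3 + y ^ 3 + z ^ 3)]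
      · rw [if_pos (sub_self _), mul_comm]
      · intro m _ hm
        rw [if_neg (sub_ne_zero.mpr (Ne.symm hm)), mul_zero]
      · intro habs
        exact absurd (Finset.mem_univ _) habs
    rw [Finset.sum_congr rfl fun x _ => hinner x, hS]
    rw [Finset.mul_sum]
    refine Finset.sum_congr rfl fun x _ => ?_
    rw [Finset.mul_sum]
    refine Finset.sum_congr rfl fun y _ => ?_
    rw [Finset.mul_sum]
  -- split off t = 0
  have hCf0 : Cf 0 = (p : ℂ) := by
    rw [hCf]
    simp only [zero_mul, e_zero]
    rw [Finset.sum_const, Finset.card_univ, ZMod.card, nsmul_eq_mul, mul_one]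
  have hGf0 : Gf 0 = S₂ := by
    rw [hGf, hS₂]
    simp only [neg_zero, zero_mul, add_zero]
  have key2 : (p : ℂ) * (S - (p : ℂ) ^ 2 * S₂)
      = ∑ t ∈ Finset.univ.erase (0 : ZMod p), Cf t ^ 3 * Gf t := by
    have h := key
    rw [← Finset.add_sum_erase _ _ (Finset.mem_univ (0 : ZMod p)), hCf0, hGf0] at h
    linear_combination -h
  -- bounding
  have hptR : (0:ℝ) ≤ (p:ℝ) := Nat.cast_nonneg p
  have hbound : ∀ t ∈ Finset.univ.erase (0 : ZMod p),
      ‖Cf t ^ 3 * Gf t‖ ≤ 8 * (p : ℝ) ^ 2 := by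
    intro t htmem
    have ht : t ≠ 0 := (Finset.mem_erase.mp htmem).1
    have hCt : ‖Cf t‖ ≤ 2 * Real.sqrt p := cubic_sum_bound h3 t ht
    have hGt : ‖Gf t‖ = Real.sqrt p := quad_sum_abs hp2 α (-t) hα
    rw [norm_mul, norm_pow]
    calc ‖Cf t‖ ^ 3 * ‖Gf t‖
        ≤ (2 * Real.sqrt p) ^ 3 * Real.sqrt p := by
          rw [hGt]
          gcongr
      _ = 8 * ((Real.sqrt p) ^ 2) ^ 2 := by ring
      _ = 8 * (p : ℝ) ^ 2 := by rw [Real.sq_sqrt hptR]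
  have habs : ‖(p : ℂ) * (S - (p : ℂ) ^ 2 * S₂)‖ ≤ (p : ℝ) * (8 * (p : ℝ) ^ 2) := by
    rw [key2]
    calc ‖∑ t ∈ Finset.univ.erase (0 : ZMod p), Cf t ^ 3 * Gf t‖
        ≤ ∑ t ∈ Finset.univ.erase (0 : ZMod p), ‖Cf t ^ 3 * Gf t‖ :=
          norm_sum_le _ _
      _ ≤ ∑ t ∈ Finset.univ.erase (0 : ZMod p), 8 * (p : ℝ) ^ 2 :=
          Finset.sum_le_sum hbound
      _ = ((Finset.univ.erase (0 : ZMod p)).card : ℝ) * (8 * (p : ℝ) ^ 2) := by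
          rw [Finset.sum_const, nsmul_eq_mul]
      _ ≤ (p : ℝ) * (8 * (p : ℝ) ^ 2) := by
          have : ((Finset.univ.erase (0 : ZMod p)).card : ℝ) ≤ (p : ℝ) := by
            have h1 : (Finset.univ.erase (0 : ZMod p)).card ≤ p := by
              calc (Finset.univ.erase (0 : ZMod p)).card
                  ≤ (Finset.univ : Finset (ZMod p)).card := Finset.card_le_card
                    (Finset.erase_subset _ _)
                _ = p := by rw [Finset.card_univ, ZMod.card]
            exact_mod_cast h1
          have h8 : (0:ℝ) ≤ 8 * (p : ℝ) ^ 2 := by positivity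
          exact mul_le_mul_of_nonneg_right this h8
  have hpC : ‖(p : ℂ) * (S - (p : ℂ) ^ 2 * S₂)‖
      = (p : ℝ) * ‖S - (p : ℂ) ^ 2 * S₂‖ := by
    rw [norm_mul, Complex.norm_natCast]
  rw [hpC] at habs
  have hppos : (0:ℝ) < (p : ℝ) := by
    exact_mod_cast hp.out.pos
  calc ‖S - (p : ℂ) ^ 2 * S₂‖
      = ((p : ℝ) * ‖S - (p : ℂ) ^ 2 * S₂‖) / (p : ℝ) := by
        field_simp
    _ ≤ ((p : ℝ) * (8 * (p : ℝ) ^ 2)) / (p : ℝ) := by gcongr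
    _ = 8 * (p : ℝ) ^ 2 := by field_simp

lemma cube_bijective (h3 : p % 3 = 2) :
    Function.Bijective (fun x : ZMod p => x ^ 3) := by
  rw [Finite.injective_iff_bijective.symm]
  intro x y hxy
  simp only at hxy
  rcases eq_or_ne y 0 with hy | hy
  · rw [hy] at hxy ⊢
    rw [zero_pow (three_ne_zero)] at hxy
    exact pow_eq_zero_iff (three_ne_zero) |>.mp hxy
  · have hx : x ≠ 0 := by
      intro h
      rw [h, zero_pow (three_ne_zero)] at hxy
      exact hy (pow_eq_zero_iff (three_ne_zero) |>.mp hxy.symm)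
    set X : (ZMod p)ˣ := Units.mk0 x hx with hX
    set Y : (ZMod p)ˣ := Units.mk0 y hy with hY
    have hXY : (X * Y⁻¹) ^ 3 = 1 := by
      ext
      rw [Units.val_pow_eq_pow_val, Units.val_one, Units.val_mul, mul_pow]
      rw [hX, hY, Units.val_mk0]
      have : ((Y⁻¹ : (ZMod p)ˣ) : ZMod p) = y⁻¹ := by
        rw [Units.val_inv_eq_inv_val, hY, Units.val_mk0]
      rw [this, inv_pow, hxy, mul_inv_cancel₀ (pow_ne_zero 3 hy)]
    have hord1 : orderOf (X * Y⁻¹) ∣ 3 := orderOf_dvd_of_pow_eq_one hXY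
    have hord2 : orderOf (X * Y⁻¹) ∣ p - 1 := by
      have := orderOf_dvd_card (x := X * Y⁻¹)
      rwa [ZMod.card_units_eq_totient, Nat.totient_prime hp.out] at this
    have hcop : Nat.Coprime 3 (p - 1) := by
      refine (Nat.prime_three.coprime_iff_not_dvd).mpr ?_
      intro hdvd
      have hge : 2 ≤ p := hp.out.two_le
      obtain ⟨c, hc⟩ := hdvd
      omega
    have : orderOf (X * Y⁻¹) ∣ 1 := Nat.dvd_gcd hord1 hord2 |>.trans (by rw [hcop])
    have hXYone : X * Y⁻¹ = 1 := orderOf_eq_one_iff.mp (Nat.dvd_one.mp this)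
    have : X = Y := mul_inv_eq_one.mp hXYone
    rw [hX, hY] at this
    have := congrArg Units.val this
    simpa using this

lemma exact_case (h3 : p % 3 = 2) (α : ZMod p) :
    (∑ x : ZMod p, ∑ y : ZMod p, ∑ z : ZMod p, e p (α * (x ^ 3 + y ^ 3 + z ^ 3) ^ 2))
    = (p : ℂ) ^ 2 * ∑ m : ZMod p, e p (α * m ^ 2) := by
  have hbij := cube_bijective h3
  calc (∑ x : ZMod p, ∑ y : ZMod p, ∑ z : ZMod p, e p (α * (x ^ 3 + y ^ 3 + z ^ 3) ^ 2))
      = ∑ x : ZMod p, ∑ y : ZMod p, ∑ z : ZMod p, e p (α * (x + y + z) ^ 2) := by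
        calc (∑ x : ZMod p, ∑ y : ZMod p, ∑ z : ZMod p, e p (α * (x ^ 3 + y ^ 3 + z ^ 3) ^ 2))
            = ∑ x : ZMod p, ∑ y : ZMod p, ∑ z : ZMod p,
                e p (α * (x ^ 3 + y ^ 3 + z) ^ 2) := by
              refine Finset.sum_congr rfl fun x _ => Finset.sum_congr rfl fun y _ => ?_
              exact hbij.sum_comp (fun w => e p (α * (x ^ 3 + y ^ 3 + w) ^ 2))
          _ = ∑ x : ZMod p, ∑ y : ZMod p, ∑ z : ZMod p,
                e p (α * (x ^ 3 + y + z) ^ 2) := by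
              refine Finset.sum_congr rfl fun x _ => ?_
              exact hbij.sum_comp (fun w => ∑ z : ZMod p, e p (α * (x ^ 3 + w + z) ^ 2))
          _ = _ := hbij.sum_comp
                (fun w => ∑ y : ZMod p, ∑ z : ZMod p, e p (α * (w + y + z) ^ 2))
    _ = ∑ _x : ZMod p, ∑ _y : ZMod p, (∑ m : ZMod p, e p (α * m ^ 2)) := by
        refine Finset.sum_congr rfl fun x _ => Finset.sum_congr rfl fun y _ => ?_
        exact Fintype.sum_equiv (Equiv.addLeft (x + y))
          (fun z => e p (α * (x + y + z) ^ 2)) (fun m => e p (α * m ^ 2))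
          (fun z => by simp [add_assoc])
    _ = (p : ℂ) ^ 2 * ∑ m : ZMod p, e p (α * m ^ 2) := by
        rw [Finset.sum_const, Finset.sum_const, Finset.card_univ, ZMod.card, nsmul_eq_mul,
          nsmul_eq_mul]
        ring

lemma abs_triple_le (α : ZMod p) :
    ‖∑ x : ZMod p, ∑ y : ZMod p, ∑ z : ZMod p,
      e p (α * (x ^ 3 + y ^ 3 + z ^ 3) ^ 2)‖ ≤ (p : ℝ) ^ 3 := by
  calc ‖∑ x : ZMod p, ∑ y : ZMod p, ∑ z : ZMod p,
        e p (α * (x ^ 3 + y ^ 3 + z ^ 3) ^ 2)‖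
      ≤ ∑ x : ZMod p, ∑ y : ZMod p, ∑ z : ZMod p, (1 : ℝ) := by
        refine (norm_sum_le _ _).trans (Finset.sum_le_sum fun x _ => ?_)
        refine (norm_sum_le _ _).trans (Finset.sum_le_sum fun y _ => ?_)
        refine (norm_sum_le _ _).trans (Finset.sum_le_sum fun z _ => ?_)
        rw [e_abs]
    _ = (p : ℝ) ^ 3 := by
        simp [Finset.sum_const, Finset.card_univ, ZMod.card]
        ring

lemma abs_single_le (α : ZMod p) :
    ‖∑ m : ZMod p, e p (α * m ^ 2)‖ ≤ (p : ℝ) := by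
  calc ‖∑ m : ZMod p, e p (α * m ^ 2)‖
      ≤ ∑ m : ZMod p, (1 : ℝ) := by
        refine (norm_sum_le _ _).trans (Finset.sum_le_sum fun m _ => ?_)
        rw [e_abs]
    _ = (p : ℝ) := by simp [Finset.sum_const, Finset.card_univ, ZMod.card]

end PrimeP

lemma sum_Icc_eq (F : ZMod p → ℂ) :
    ∑ r ∈ Finset.Icc 1 p, F ((r : ℕ) : ZMod p) = ∑ x : ZMod p, F x := by
  have hp0 : p ≠ 0 := NeZero.ne p
  refine Finset.sum_nbij' (fun r => ((r : ℕ) : ZMod p))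
    (fun x => if x = 0 then p else x.val) ?_ ?_ ?_ ?_ ?_
  · intro r _
    exact Finset.mem_univ _
  · intro x _
    rcases eq_or_ne x 0 with hx | hx
    · rw [if_pos hx]
      exact Finset.mem_Icc.mpr ⟨Nat.one_le_iff_ne_zero.mpr hp0, le_refl p⟩
    · rw [if_neg hx]
      refine Finset.mem_Icc.mpr ⟨?_, le_of_lt (ZMod.val_lt x)⟩
      exact Nat.pos_of_ne_zero fun h => hx ((ZMod.val_eq_zero x).mp h)
  · intro r hr
    obtain ⟨h1, h2⟩ := Finset.mem_Icc.mp hr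
    rcases eq_or_ne r p with hrp | hrp
    · rw [hrp]
      simp [ZMod.natCast_self]
    · have hrlt : r < p := lt_of_le_of_ne h2 hrp
      have hne : ((r : ℕ) : ZMod p) ≠ 0 := by
        rw [Ne, ZMod.natCast_eq_zero_iff]
        intro hdvd
        have := Nat.le_of_dvd (by omega) hdvd
        omega
      rw [if_neg hne, ZMod.val_natCast_of_lt hrlt]
  · intro x _
    rcases eq_or_ne x 0 with hx | hx
    · rw [if_pos hx, ZMod.natCast_self, hx]
    · rw [if_neg hx]
      simp [ZMod.natCast_val, ZMod.cast_id]
  · intro r _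
    rfl

end CSA

theorem complete_sum_approx :
    ∃ C : ℝ, 0 < C ∧ ∀ p : ℕ, p.Prime → ∀ a : ℤ, IsCoprime a (p : ℤ) →
      norm
        ((∑ r₁ ∈ Finset.Icc 1 p, ∑ r₂ ∈ Finset.Icc 1 p, ∑ r₃ ∈ Finset.Icc 1 p,
            eq' p (a * ((r₁ : ℤ) ^ 3 + (r₂ : ℤ) ^ 3 + (r₃ : ℤ) ^ 3) ^ 2)) -
          (p : ℂ) ^ 2 * ∑ r ∈ Finset.Icc 1 p, eq' p (a * (r : ℤ) ^ 2)) ≤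
        C * (p : ℝ) ^ 2 := by
  classical
  refine ⟨16, by norm_num, ?_⟩
  intro p hp a ha
  haveI : Fact p.Prime := ⟨hp⟩
  haveI : NeZero p := ⟨hp.pos.ne'⟩
  set α : ZMod p := ((a : ℤ) : ZMod p) with hα
  have hα0 : α ≠ 0 := by
    rw [hα, Ne, ZMod.intCast_zmod_eq_zero_iff_dvd]
    intro hdvd
    have := (Int.isCoprime_iff_gcd_eq_one.mp ha)
    have h2 : (p : ℤ) ∣ Int.gcd a p := Int.dvd_coe_gcd hdvd dvd_rfl
    rw [this] at h2
    have := Int.le_of_dvd (by norm_num) h2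
    have := hp.two_le
    omega
  -- translate the sums to ZMod p
  have hconv3 : ∀ r₁ r₂ r₃ : ℕ, eq' p (a * ((r₁ : ℤ) ^ 3 + (r₂ : ℤ) ^ 3 + (r₃ : ℤ) ^ 3) ^ 2)
      = CSA.e p (α * (((r₁ : ℕ) : ZMod p) ^ 3 + ((r₂ : ℕ) : ZMod p) ^ 3
          + ((r₃ : ℕ) : ZMod p) ^ 3) ^ 2) := by
    intro r₁ r₂ r₃
    rw [← CSA.e_intCast]
    congr 1
    push_cast
    ring
  have hconv1 : ∀ r : ℕ, eq' p (a * (r : ℤ) ^ 2)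
      = CSA.e p (α * ((r : ℕ) : ZMod p) ^ 2) := by
    intro r
    rw [← CSA.e_intCast]
    congr 1
    push_cast
    ring
  have htriple : (∑ r₁ ∈ Finset.Icc 1 p, ∑ r₂ ∈ Finset.Icc 1 p, ∑ r₃ ∈ Finset.Icc 1 p,
      eq' p (a * ((r₁ : ℤ) ^ 3 + (r₂ : ℤ) ^ 3 + (r₃ : ℤ) ^ 3) ^ 2))
      = ∑ x : ZMod p, ∑ y : ZMod p, ∑ z : ZMod p,
          CSA.e p (α * (x ^ 3 + y ^ 3 + z ^ 3) ^ 2) := by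
    rw [Finset.sum_congr rfl fun r₁ _ => Finset.sum_congr rfl fun r₂ _ =>
      Finset.sum_congr rfl fun r₃ _ => hconv3 r₁ r₂ r₃]
    rw [Finset.sum_congr rfl fun r₁ _ => Finset.sum_congr rfl fun r₂ _ =>
      CSA.sum_Icc_eq (fun z => CSA.e p (α * (((r₁ : ℕ) : ZMod p) ^ 3
        + ((r₂ : ℕ) : ZMod p) ^ 3 + z ^ 3) ^ 2))]
    rw [Finset.sum_congr rfl fun r₁ _ =>
      CSA.sum_Icc_eq (fun y => ∑ z : ZMod p, CSA.e p (α * (((r₁ : ℕ) : ZMod p) ^ 3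
        + y ^ 3 + z ^ 3) ^ 2))]
    rw [CSA.sum_Icc_eq (fun x => ∑ y : ZMod p, ∑ z : ZMod p, CSA.e p (α * (x ^ 3
        + y ^ 3 + z ^ 3) ^ 2))]
  have hsingle : (∑ r ∈ Finset.Icc 1 p, eq' p (a * (r : ℤ) ^ 2))
      = ∑ m : ZMod p, CSA.e p (α * m ^ 2) := by
    rw [Finset.sum_congr rfl fun r _ => hconv1 r]
    rw [CSA.sum_Icc_eq (fun m => CSA.e p (α * m ^ 2))]
  rw [htriple, hsingle]
  -- case analysis on p mod 3
  have hmod : p % 3 = 0 ∨ p % 3 = 1 ∨ p % 3 = 2 := by omega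
  rcases hmod with h0 | h1 | h2
  · -- p = 3 : trivial bound
    have hp3 : p = 3 := by
      have hdvd : 3 ∣ p := Nat.dvd_of_mod_eq_zero h0
      exact ((Nat.prime_dvd_prime_iff_eq Nat.prime_three hp).mp hdvd).symm
    have hb1 := CSA.abs_triple_le (p := p) α
    have hb2 := CSA.abs_single_le (p := p) α
    calc ‖_‖
        ≤ ‖∑ x : ZMod p, ∑ y : ZMod p, ∑ z : ZMod p,
            CSA.e p (α * (x ^ 3 + y ^ 3 + z ^ 3) ^ 2)‖
          + ‖(p : ℂ) ^ 2 * ∑ m : ZMod p, CSA.e p (α * m ^ 2)‖ :=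
          norm_sub_le _ _
      _ ≤ (p : ℝ) ^ 3 + (p : ℝ) ^ 2 * (p : ℝ) := by
          refine add_le_add hb1 ?_
          rw [norm_mul, norm_pow, Complex.norm_natCast]
          exact mul_le_mul_of_nonneg_left hb2 (by positivity)
      _ ≤ 16 * (p : ℝ) ^ 2 := by
          rw [hp3]
          norm_num
  · -- p ≡ 1 mod 3 : main estimate
    have h3 : 3 ∣ p - 1 := by omega
    have hp2 : p ≠ 2 := by omega
    calc ‖_‖ ≤ 8 * (p : ℝ) ^ 2 := CSA.main_est h3 hp2 α hα0
      _ ≤ 16 * (p : ℝ) ^ 2 := by nlinarith [sq_nonneg ((p : ℝ))]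
  · -- p ≡ 2 mod 3 : exact identity
    rw [CSA.exact_case h2 α, sub_self, norm_zero]
    positivity
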